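/- For all integers n ≥ 3, the total number of symmetric peaks over all Catalan words of length n equals Σ_{k=0}^{n-3} C(2k+2, k); for n = 1, 2 this total is 0. -/

import Mathlib

/-!
Sort Catalan words by their last letter `a`. Appending a letter `b ≤ a + 1` closes a symmetric
peak exactly when `b + 1 = a` and the word ends in an open peak `(a - 1) a^l`; an open peak
survives only if `b = a`, and a new one starts if `b = a + 1`. Hence, for every test function
`g`, the sums `S_n^f(g) = ∑_{w ∈ C_n} f w * g (last w)` with `f = 1, openPeaks, symPeaks`
satisfy linear recurrences in `n` (with `g` transformed), and an induction on `n`, for all `g`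
at once, gives `S_{n+2}^symPeaks(g) = S_{n+1}^symPeaks(g) + n * S_n^1(g)`. For `g = 1` the
total thus grows by `n * #C_n = n * catalan n = C(2n, n-1)`; that `#C_n = catalan n` follows
from the ballot numbers, which count the words of `C_n` by last letter.
-/
/-- The set of Catalan words of length `n`: words `w` over ℕ with `w 1 = 0` and
`w (i+1) ≤ w i + 1` for all `i`. -/
def CatalanWord (n : ℕ) : Set (List ℕ) :=
  {w | w.length = n ∧ w.getD 0 0 = 0 ∧
    ∀ i, i + 1 < n → w.getD (i + 1) 0 ≤ w.getD i 0 + 1}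

/-- Number of symmetric peaks of `w`: occurrences of a factor `a (a+1)^l a` with `l ≥ 1`. -/
def symPeaks (w : List ℕ) : ℕ :=
  ∑ l ∈ Finset.Icc 1 w.length, ((Finset.range w.length).filter (fun i =>
    i + l + 1 < w.length ∧
    (∀ j, j < l → w.getD (i + 1 + j) 0 = w.getD i 0 + 1) ∧
    w.getD (i + l + 1) 0 = w.getD i 0)).card

open Finset

lemma getLastD_eq_getD (w : List ℕ) : w.getLastD 0 = w.getD (w.length - 1) 0 := by
  simp [List.getLastD_eq_getLast?, List.getLast?_eq_getElem?, List.getD_eq_getElem?_getD]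

lemma getD_append_singleton_length (w : List ℕ) (b : ℕ) : (w ++ [b]).getD w.length 0 = b := by
  simp

lemma catalanWord_zero : CatalanWord 0 = {[]} := by
  ext w
  simp only [CatalanWord, Set.mem_ofPred_eq, Set.mem_singleton_iff]
  constructor
  · exact fun h => List.length_eq_zero_iff.mp h.1
  · rintro rfl
    exact ⟨rfl, rfl, fun i hi => by omega⟩

lemma catalanWord_one : CatalanWord 1 = {[0]} := by
  ext w
  simp only [CatalanWord, Set.mem_ofPred_eq, Set.mem_singleton_iff]
  constructor
  · rintro ⟨hlen, h0, -⟩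
    obtain ⟨a, rfl⟩ := List.length_eq_one_iff.mp hlen
    simpa using h0
  · rintro rfl
    exact ⟨rfl, rfl, fun i hi => by omega⟩

lemma append_mem_catalanWord_iff {w : List ℕ} {n : ℕ} (hn : n ≠ 0) (b : ℕ) :
    w ++ [b] ∈ CatalanWord (n + 1) ↔ w ∈ CatalanWord n ∧ b ≤ w.getLastD 0 + 1 := by
  simp only [CatalanWord, Set.mem_ofPred_eq, List.length_append, List.length_singleton,
    Nat.add_right_cancel_iff, getLastD_eq_getD, and_assoc]
  refine and_congr_right fun hlen => ?_
  subst hlen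
  have hget : ∀ k < w.length, (w ++ [b]).getD k 0 = w.getD k 0 :=
    fun k hk => List.getD_append _ _ _ _ hk
  rw [hget 0 (by omega)]
  refine and_congr_right fun _ => ⟨fun hstep => ⟨fun i hi => ?_, ?_⟩, fun ⟨hstep, hb⟩ i hi => ?_⟩
  · simpa only [hget i (by omega), hget (i + 1) hi] using hstep i (by omega)
  · simpa only [Nat.sub_add_cancel (Nat.pos_of_ne_zero hn), getD_append_singleton_length,
      hget (w.length - 1) (by omega)] using hstep (w.length - 1) (by omega)
  · obtain hi | hi : i + 1 < w.length ∨ i + 1 = w.length := by omega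
    · simpa only [hget i (by omega), hget (i + 1) hi] using hstep i hi
    · rw [hi, getD_append_singleton_length, hget i (by omega)]
      rwa [show i = w.length - 1 by omega]

def catalanWords : ℕ → Finset (List ℕ)
  | 0 => {[]}
  | 1 => {[0]}
  | n + 2 => (catalanWords (n + 1)).biUnion fun w =>
      (range (w.getLastD 0 + 2)).image fun b => w ++ [b]

lemma mem_catalanWords {n : ℕ} {v : List ℕ} : v ∈ catalanWords n ↔ v ∈ CatalanWord n := by
  induction n generalizing v with
  | zero => simp [catalanWords, catalanWord_zero]
  | succ n ih =>
    rcases n with _ | n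
    · simp [catalanWords, catalanWord_one]
    simp only [catalanWords, mem_biUnion, mem_image, mem_range, ih]
    constructor
    · rintro ⟨w, hw, b, hb, rfl⟩
      exact (append_mem_catalanWord_iff n.succ_ne_zero b).2 ⟨hw, by omega⟩
    · intro hv
      have hne : v ≠ [] := by
        rintro rfl
        simp [CatalanWord] at hv
      rw [← List.dropLast_append_getLast hne] at hv ⊢
      obtain ⟨hw, hb⟩ := (append_mem_catalanWord_iff n.succ_ne_zero _).1 hv
      exact ⟨_, hw, _, by omega, rfl⟩

lemma coe_catalanWords (n : ℕ) : (catalanWords n : Set (List ℕ)) = CatalanWord n :=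
  Set.ext fun _ => mem_catalanWords

lemma length_of_mem_catalanWords {n : ℕ} {w : List ℕ} (hw : w ∈ catalanWords n) :
    w.length = n :=
  (mem_catalanWords.1 hw).1

lemma sum_catalanWords_succ {M : Type*} [AddCommMonoid M] (f : List ℕ → M) {n : ℕ} (hn : n ≠ 0) :
    ∑ v ∈ catalanWords (n + 1), f v =
      ∑ w ∈ catalanWords n, ∑ b ∈ range (w.getLastD 0 + 2), f (w ++ [b]) := by
  obtain ⟨n, rfl⟩ := Nat.exists_eq_succ_of_ne_zero hn
  rw [catalanWords, sum_biUnion]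
  · refine sum_congr rfl fun w _ => sum_image fun b _ b' _ h => ?_
    simpa using h
  · intro w _ w' _ hne
    refine disjoint_left.2 fun v hv hv' => hne ?_
    obtain ⟨b, -, rfl⟩ := mem_image.1 hv
    obtain ⟨b', -, h⟩ := mem_image.1 hv'
    exact (List.append_inj_left' h rfl).symm

lemma getLastD_lt_of_mem_catalanWords {n : ℕ} (hn : n ≠ 0) {w : List ℕ}
    (hw : w ∈ catalanWords n) : w.getLastD 0 < n := by
  induction n generalizing w with
  | zero => exact absurd rfl hn
  | succ n ih =>
    rcases n with _ | n
    · simp_all [catalanWords]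
    simp only [catalanWords, mem_biUnion, mem_image, mem_range] at hw
    obtain ⟨u, hu, b, hb, rfl⟩ := hw
    have := ih n.succ_ne_zero hu
    rw [List.getLastD_concat]
    omega

def IsRiseRun (w : List ℕ) (i l : ℕ) : Prop :=
  ∀ j, j < l → w.getD (i + 1 + j) 0 = w.getD i 0 + 1

instance (w : List ℕ) (i l : ℕ) : Decidable (IsRiseRun w i l) :=
  inferInstanceAs (Decidable (∀ j, j < l → _))

/-- Occurrences of a factor `a (a+1)^l`, `l ≥ 1`, ending the word: the symmetric peaks that one
more letter `a` would close. -/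
def openPeaks (w : List ℕ) : ℕ :=
  ∑ l ∈ Icc 1 w.length, #{i ∈ range w.length | i + l + 1 = w.length ∧ IsRiseRun w i l}

lemma IsRiseRun.getLastD {w : List ℕ} {i l : ℕ} (h : IsRiseRun w i l) (hl : 0 < l)
    (hlen : i + l + 1 = w.length) : w.getLastD 0 = w.getD i 0 + 1 := by
  rw [getLastD_eq_getD, ← h (l - 1) (by omega)]
  congr 1
  omega

lemma isRiseRun_succ {w : List ℕ} {i l : ℕ} :
    IsRiseRun w i (l + 1) ↔ IsRiseRun w i l ∧ w.getD (i + 1 + l) 0 = w.getD i 0 + 1 :=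
  Nat.forall_lt_succ_right

lemma isRiseRun_append_iff {w : List ℕ} {b i l : ℕ} (h : i + l < w.length) :
    IsRiseRun (w ++ [b]) i l ↔ IsRiseRun w i l := by
  refine forall₂_congr fun j hj => ?_
  rw [List.getD_append _ _ _ _ (by omega), List.getD_append _ _ _ _ (by omega)]

lemma sum_Icc_one_eq_sum_range {M : Type*} [AddCommMonoid M] (f : ℕ → M) (n : ℕ) :
    ∑ l ∈ Icc 1 n, f l = ∑ m ∈ range n, f (m + 1) := by
  rw [range_eq_Ico, sum_Ico_add', zero_add, Ico_add_one_right_eq_Icc]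

lemma filter_range_eq_of_le {p : ℕ → Prop} [DecidablePred p] {M N : ℕ} (hMN : M ≤ N)
    (hp : ∀ i, p i → i < M) : {i ∈ range N | p i} = {i ∈ range M | p i} := by
  ext i
  simp only [mem_filter, mem_range]
  exact ⟨fun ⟨_, h⟩ => ⟨hp i h, h⟩, fun ⟨hi, h⟩ => ⟨by omega, h⟩⟩

lemma sum_card_filter_Icc_range_eq {p : ℕ → ℕ → Prop} [∀ i l, Decidable (p i l)] {M N : ℕ}
    (hMN : M ≤ N) (hp : ∀ i l, p i l → i + l < M) :
    ∑ l ∈ Icc 1 N, #{i ∈ range N | p i l} = ∑ l ∈ Icc 1 M, #{i ∈ range M | p i l} := by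
  symm
  refine sum_subset_zero_on_sdiff (Icc_subset_Icc_right hMN) (fun l hl => ?_) fun l _ => ?_
  · refine card_eq_zero.2 (filter_eq_empty_iff.2 fun i _ hi => ?_)
    have := hp i l hi
    simp only [mem_sdiff, mem_Icc] at hl
    omega
  · rw [filter_range_eq_of_le hMN fun i h => by have := hp i l h; omega]

lemma symPeak_append_iff {w : List ℕ} {b i l : ℕ} :
    (i + l + 1 < w.length + 1 ∧ IsRiseRun (w ++ [b]) i l ∧
        (w ++ [b]).getD (i + l + 1) 0 = (w ++ [b]).getD i 0) ↔
      (i + l + 1 < w.length ∧ IsRiseRun w i l ∧ w.getD (i + l + 1) 0 = w.getD i 0) ∨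
        (i + l + 1 = w.length ∧ IsRiseRun w i l ∧ b = w.getD i 0) := by
  rcases Nat.lt_trichotomy (i + l + 1) w.length with h | h | h
  · rw [isRiseRun_append_iff (by omega), List.getD_append _ _ _ i (by omega),
      List.getD_append _ _ _ _ h]
    simp only [h, h.ne, Nat.lt_succ_of_lt h, true_and, false_and, or_false]
  · rw [isRiseRun_append_iff (by omega), List.getD_append _ _ _ i (by omega), h,
      getD_append_singleton_length]
    simp only [lt_irrefl, Nat.lt_succ_self, true_and, false_and, false_or]
  · omega

lemma openPeak_append_iff {w : List ℕ} {b i m : ℕ} :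
    (i + (m + 1) + 1 = w.length + 1 ∧ IsRiseRun (w ++ [b]) i (m + 1)) ↔
      i + m + 1 = w.length ∧ IsRiseRun w i m ∧ b = w.getD i 0 + 1 := by
  by_cases h : i + m + 1 = w.length
  · rw [isRiseRun_succ, isRiseRun_append_iff (by omega), show i + 1 + m = w.length by omega,
      getD_append_singleton_length, List.getD_append _ _ _ i (by omega)]
    simp only [h, show i + (m + 1) + 1 = w.length + 1 by omega, true_and]
  · simp only [h, false_and, iff_false, not_and]
    omega

lemma symPeaks_append (w : List ℕ) (b : ℕ) :
    symPeaks (w ++ [b]) = symPeaks w + if b + 1 = w.getLastD 0 then openPeaks w else 0 := by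
  set n := w.length
  let P i l := i + l + 1 < n ∧ IsRiseRun w i l ∧ w.getD (i + l + 1) 0 = w.getD i 0
  let Q i l := i + l + 1 = n ∧ IsRiseRun w i l ∧ b = w.getD i 0
  have hP : symPeaks w = ∑ l ∈ Icc 1 n, #{i ∈ range n | P i l} := rfl
  have hQ : ∑ l ∈ Icc 1 n, #{i ∈ range n | Q i l} =
      if b + 1 = w.getLastD 0 then openPeaks w else 0 := by
    split_ifs with hb
    · refine sum_congr rfl fun l hl => congrArg card (filter_congr fun i _ => ?_)
      refine ⟨fun ⟨h, hr, _⟩ => ⟨h, hr⟩, fun ⟨h, hr⟩ => ⟨h, hr, ?_⟩⟩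
      have := hr.getLastD (mem_Icc.1 hl).1 h
      omega
    · refine sum_eq_zero fun l hl => card_eq_zero.2 (filter_eq_empty_iff.2 fun i _ hi => hb ?_)
      rw [hi.2.1.getLastD (mem_Icc.1 hl).1 hi.1, hi.2.2]
  calc symPeaks (w ++ [b])
      = ∑ l ∈ Icc 1 (n + 1), (#{i ∈ range (n + 1) | P i l} + #{i ∈ range (n + 1) | Q i l}) := by
        simp only [symPeaks, List.length_append, List.length_singleton]
        refine sum_congr rfl fun l _ => ?_
        rw [← card_union_of_disjoint (disjoint_filter.2 fun i _ hP hQ => by omega), ← filter_or]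
        exact congrArg card (filter_congr fun i _ => symPeak_append_iff)
    _ = symPeaks w + if b + 1 = w.getLastD 0 then openPeaks w else 0 := by
        rw [sum_add_distrib, hP, ← hQ,
          sum_card_filter_Icc_range_eq n.le_succ fun i l h => by omega,
          sum_card_filter_Icc_range_eq n.le_succ fun i l h => by omega]

lemma openPeaks_append {w : List ℕ} (hw : w ≠ []) (b : ℕ) :
    openPeaks (w ++ [b]) =
      (if b = w.getLastD 0 + 1 then 1 else 0) + if b = w.getLastD 0 then openPeaks w else 0 := by
  set n := w.length with hn
  have hn0 : n ≠ 0 := by simpa [n] using hw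
  let R i m := i + m + 1 = n ∧ IsRiseRun w i m ∧ b = w.getD i 0 + 1
  have hfirst : #{i ∈ range n | R i 0} = if b = w.getLastD 0 + 1 then 1 else 0 := by
    rw [getLastD_eq_getD, ← hn]
    split_ifs with hb
    · refine card_eq_one.2 ⟨n - 1, ext fun i => ?_⟩
      simp only [R, mem_filter, mem_range, mem_singleton]
      refine ⟨fun ⟨_, h, _⟩ => by omega, fun h => ?_⟩
      subst h
      exact ⟨by omega, by omega, fun j hj => absurd hj j.not_lt_zero, hb⟩
    · refine card_eq_zero.2 (filter_eq_empty_iff.2 fun i _ ⟨h, _, hb'⟩ => hb ?_)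
      rwa [show n - 1 = i by omega]
  have hrest : ∑ m ∈ range n, #{i ∈ range n | R i (m + 1)} =
      if b = w.getLastD 0 then openPeaks w else 0 := by
    split_ifs with hb
    · rw [openPeaks, sum_Icc_one_eq_sum_range]
      refine sum_congr rfl fun m _ => congrArg card (filter_congr fun i _ => ?_)
      exact ⟨fun ⟨h, hr, _⟩ => ⟨h, hr⟩,
        fun ⟨h, hr⟩ => ⟨h, hr, by rw [hb, hr.getLastD m.succ_pos h]⟩⟩
    · refine sum_eq_zero fun m _ => card_eq_zero.2 (filter_eq_empty_iff.2 ?_)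
      exact fun i _ ⟨h, hr, hb'⟩ => hb (by rw [hb', hr.getLastD m.succ_pos h])
  calc openPeaks (w ++ [b])
      = ∑ m ∈ range (n + 1), #{i ∈ range n | R i m} := by
        simp only [openPeaks, List.length_append, List.length_singleton, sum_Icc_one_eq_sum_range]
        refine sum_congr rfl fun m _ => ?_
        rw [← filter_range_eq_of_le n.le_succ fun i h => by omega]
        exact congrArg card (filter_congr fun i _ => openPeak_append_iff)
    _ = _ := by rw [sum_range_succ', hfirst, hrest, add_comm]

lemma openPeaks_eq_zero_of_getLastD_eq_zero {w : List ℕ} (hw : w.getLastD 0 = 0) :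
    openPeaks w = 0 :=
  sum_eq_zero fun l hl => card_eq_zero.2 <| filter_eq_empty_iff.2 fun i _ ⟨h, hr⟩ => by
    have := hr.getLastD (mem_Icc.1 hl).1 h
    omega

def lastLetterSum (f : List ℕ → ℕ) (n : ℕ) (g : ℕ → ℕ) : ℕ :=
  ∑ w ∈ catalanWords n, f w * g (w.getLastD 0)

lemma lastLetterSum_one (f : List ℕ → ℕ) (g : ℕ → ℕ) : lastLetterSum f 1 g = f [0] * g 0 := by
  simp [lastLetterSum, catalanWords]

lemma lastLetterSum_succ (f : List ℕ → ℕ) {n : ℕ} (hn : n ≠ 0) (g : ℕ → ℕ) :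
    lastLetterSum f (n + 1) g =
      ∑ w ∈ catalanWords n, ∑ b ∈ range (w.getLastD 0 + 2), f (w ++ [b]) * g b := by
  simp [lastLetterSum, sum_catalanWords_succ _ hn]

lemma lastLetterSum_const_succ {n : ℕ} (hn : n ≠ 0) (g : ℕ → ℕ) :
    lastLetterSum (fun _ => 1) (n + 1) g =
      lastLetterSum (fun _ => 1) n fun a => ∑ b ∈ range (a + 2), g b := by
  rw [lastLetterSum_succ _ hn, lastLetterSum]
  simp only [one_mul]

lemma lastLetterSum_openPeaks_succ {n : ℕ} (hn : n ≠ 0) (g : ℕ → ℕ) :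
    lastLetterSum openPeaks (n + 1) g =
      lastLetterSum openPeaks n g + lastLetterSum (fun _ => 1) n fun a => g (a + 1) := by
  rw [lastLetterSum_succ _ hn, lastLetterSum, lastLetterSum, ← sum_add_distrib]
  refine sum_congr rfl fun w hw => ?_
  have hw' : w ≠ [] := by
    rintro rfl
    exact hn (length_of_mem_catalanWords hw).symm
  simp only [openPeaks_append hw', add_mul, sum_add_distrib, ite_mul, one_mul, zero_mul,
    sum_ite_eq', mem_range]
  rw [if_pos (by omega), if_pos (by omega), add_comm]

lemma lastLetterSum_symPeaks_succ {n : ℕ} (hn : n ≠ 0) (g : ℕ → ℕ) :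
    lastLetterSum symPeaks (n + 1) g =
      lastLetterSum symPeaks n (fun a => ∑ b ∈ range (a + 2), g b) +
        lastLetterSum openPeaks n fun a => g (a - 1) := by
  rw [lastLetterSum_succ _ hn, lastLetterSum, lastLetterSum, ← sum_add_distrib]
  refine sum_congr rfl fun w _ => ?_
  simp only [symPeaks_append, add_mul, sum_add_distrib, ite_mul, zero_mul, mul_sum]
  congr 1
  rcases (w.getLastD 0).eq_zero_or_pos with h | h
  · simp [openPeaks_eq_zero_of_getLastD_eq_zero h]
  · rw [sum_congr rfl fun b _ => if_congr (show b + 1 = _ ↔ b = w.getLastD 0 - 1 by omega) rfl rfl,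
      sum_ite_eq', if_pos (mem_range.2 (by omega))]

lemma lastLetterSum_symPeaks_add_two (n : ℕ) (g : ℕ → ℕ) :
    lastLetterSum symPeaks (n + 2) g =
      lastLetterSum symPeaks (n + 1) g + n * lastLetterSum (fun _ => 1) n g := by
  induction n generalizing g with
  | zero =>
    have hsymp : symPeaks [0] = 0 := by decide
    have hopen : openPeaks [0] = 0 := by decide
    simp [lastLetterSum_symPeaks_succ one_ne_zero, lastLetterSum_one, hsymp, hopen]
  | succ n ih =>
    have hcount : n * lastLetterSum (fun _ => 1) n (fun a => ∑ b ∈ range (a + 2), g b) =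
        n * lastLetterSum (fun _ => 1) (n + 1) g := by
      rcases n.eq_zero_or_pos with rfl | hn
      · simp
      · rw [lastLetterSum_const_succ hn.ne']
    rw [lastLetterSum_symPeaks_succ (n + 1).succ_ne_zero, ih, hcount,
      lastLetterSum_openPeaks_succ n.succ_ne_zero, lastLetterSum_symPeaks_succ n.succ_ne_zero]
    simp only [Nat.add_sub_cancel]
    ring

def numLastGe (n c : ℕ) : ℕ := #{w ∈ catalanWords n | c ≤ w.getLastD 0}

lemma numLastGe_succ {n : ℕ} (hn : n ≠ 0) (c : ℕ) :
    numLastGe (n + 1) c = numLastGe n (c - 1) + numLastGe (n + 1) (c + 1) := by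
  have hlast : #{v ∈ catalanWords (n + 1) | v.getLastD 0 = c} = numLastGe n (c - 1) := by
    rw [card_filter, sum_catalanWords_succ _ hn, numLastGe, card_filter]
    refine sum_congr rfl fun w _ => ?_
    simp only [List.getLastD_concat, sum_ite_eq', mem_range]
    exact if_congr (by omega) rfl rfl
  rw [← hlast]
  unfold numLastGe
  rw [← card_union_of_disjoint (disjoint_filter.2 fun v _ h h' => by omega), ← filter_or]
  exact congrArg card (filter_congr fun v _ => by omega)

lemma numLastGe_eq_zero {n c : ℕ} (hn : n ≠ 0) (h : n ≤ c) : numLastGe n c = 0 :=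
  card_eq_zero.2 <| filter_eq_empty_iff.2 fun w hw hc => by
    have := getLastD_lt_of_mem_catalanWords hn hw
    omega

lemma numLastGe_self (c : ℕ) : numLastGe (c + 1) c = 1 := by
  induction c with
  | zero => decide
  | succ c ih => rw [numLastGe_succ c.succ_ne_zero, Nat.add_sub_cancel, ih,
      numLastGe_eq_zero (c + 1).succ_ne_zero le_rfl]

/-- The ballot numbers `C(c+2k+1, k) - C(c+2k+1, k-1)`, in a form without subtraction. -/
lemma numLastGe_add_choose (c k : ℕ) :
    numLastGe (c + k + 1) c + (c + 2 * k + 1).choose (c + k + 2) =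
      (c + 2 * k + 1).choose (c + k + 1) := by
  induction k generalizing c with
  | zero => simp [numLastGe_self]
  | succ k ihk =>
    induction c with
    | zero =>
      have hrec := numLastGe_succ (n := k + 1) k.succ_ne_zero 0
      have h0 := ihk 0
      have h1 := ihk 1
      have p1 := Nat.choose_succ_succ' (2 * k + 2) (k + 2)
      have p2 := Nat.choose_succ_succ' (2 * k + 2) (k + 1)
      have p3 := Nat.choose_succ_succ' (2 * k + 1) (k + 1)
      have p4 := Nat.choose_succ_succ' (2 * k + 1) k
      have hsymm := Nat.choose_symm_half k
      ring_nf at *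
      omega
    | succ c ihc =>
      have hrec := numLastGe_succ (n := c + k + 2) (by omega) (c + 1)
      have h2 := ihk (c + 2)
      have p1 := Nat.choose_succ_succ' (c + 2 * k + 3) (c + k + 3)
      have p2 := Nat.choose_succ_succ' (c + 2 * k + 3) (c + k + 2)
      simp only [Nat.add_sub_cancel] at hrec
      ring_nf at *
      omega

lemma card_catalanWords (n : ℕ) : #(catalanWords n) = catalan n := by
  rcases n with _ | m
  · simp [catalanWords]
  have hcard : #(catalanWords (m + 1)) = numLastGe (m + 1) 0 := by
    simp [numLastGe]
  have hballot := numLastGe_add_choose 0 m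
  have hcat := succ_mul_catalan_eq_centralBinom (m + 1)
  have hpascal := Nat.choose_succ_succ' (2 * m + 1) m
  have hsymm := Nat.choose_symm_half m
  have hratio := Nat.choose_succ_right_eq (2 * m + 1) (m + 1)
  rw [Nat.centralBinom_eq_two_mul_choose, show 2 * (m + 1) = 2 * m + 1 + 1 by ring] at hcat
  rw [show 2 * m + 1 - (m + 1) = m by omega] at hratio
  simp only [zero_add] at hballot
  refine hcard.trans (Nat.eq_of_mul_eq_mul_left (show 0 < m + 2 by omega) ?_)
  nlinarith

lemma succ_mul_catalan_succ (m : ℕ) : (m + 1) * catalan (m + 1) = (2 * m + 2).choose m := by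
  have hcat := succ_mul_catalan_eq_centralBinom (m + 1)
  have hratio := Nat.choose_succ_right_eq (2 * m + 2) m
  rw [Nat.centralBinom_eq_two_mul_choose, show 2 * (m + 1) = 2 * m + 2 by ring] at hcat
  rw [show 2 * m + 2 - m = m + 2 by omega] at hratio
  refine Nat.eq_of_mul_eq_mul_left (show 0 < m + 2 by omega) ?_
  nlinarith

lemma sum_symPeaks_catalanWords (n : ℕ) :
    ∑ w ∈ catalanWords (n + 1), symPeaks w = ∑ k ∈ range (n - 1), (2 * k + 2).choose k := by
  induction n with
  | zero => decide
  | succ n ih =>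
    have h := lastLetterSum_symPeaks_add_two n fun _ => 1
    simp only [lastLetterSum, mul_one, sum_const, smul_eq_mul, card_catalanWords] at h
    rw [h, ih]
    rcases n with _ | m
    · simp
    · rw [succ_mul_catalan_succ, Nat.add_sub_cancel, Nat.add_sub_cancel, sum_range_succ]

/-- The total number of symmetric peaks over all Catalan words of length `n` equals
`Σ_{k=0}^{n-3} C(2k+2, k)` for `n ≥ 3`, and is `0` for `n = 1, 2`. -/
theorem total_symPeaks :
    (∀ n : ℕ, 3 ≤ n →
      ∑ᶠ w ∈ CatalanWord n, symPeaks w =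
        ∑ k ∈ Finset.range (n - 2), Nat.choose (2 * k + 2) k) ∧
    (∑ᶠ w ∈ CatalanWord 1, symPeaks w = 0) ∧
    (∑ᶠ w ∈ CatalanWord 2, symPeaks w = 0) := by
  simp only [← coe_catalanWords, finsum_mem_coe_finset]
  refine ⟨fun n hn => ?_, sum_symPeaks_catalanWords 0, sum_symPeaks_catalanWords 1⟩
  obtain ⟨n, rfl⟩ := Nat.exists_eq_add_of_le' (show 1 ≤ n by omega)
  exact sum_symPeaks_catalanWords n
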